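/- In the setting of the Kan-extension isomorphism (Φ : I × A → A with I, A small; extensions Φ_{K₁,T₁} : J₁ × B₁ → B₁ and Φ_{K₂,T₂} : J₂ × B₂ → B₂; H : J₂ → J₁ fully faithful; adjunction (L ⊣ R, η, ε) with L : B₁ → B₂, R : B₂ → B₁, L∘T₁ = T₂ and K₁ = H∘K₂), for each object j of J₂ there is an equivalence of categories Alg(Φ_{K₁,T₁}(H(j), −))|Fix_η(B₁) ≃ Alg(Φ_{K₂,T₂}(j, −))|Fix_ε(B₂), whose functors are induced by the adjunction L ⊣ R. -/

import Mathlib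

/-!
STATEMENT 14: In the setting of the Kan-extension isomorphism (`Φ : I × A → A` with `I`, `A`
small; pointwise extensions `Φ_{K₁,T₁} : J₁ × B₁ → B₁` and `Φ_{K₂,T₂} : J₂ × B₂ → B₂`;
`H : J₂ → J₁` fully faithful; adjunction `(L ⊣ R, η, ε)` with `L : B₁ → B₂`, `R : B₂ → B₁`,
`L∘T₁ = T₂`, `K₁ = H∘K₂`), for each object `j` of `J₂` there is an equivalence of categories
`Alg(Φ_{K₁,T₁}(H(j), −))|Fix_η(B₁) ≃ Alg(Φ_{K₂,T₂}(j, −))|Fix_ε(B₂)` whose functors are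
induced by the adjunction `L ⊣ R` (they act as `L` and `R` on the carriers).
-/

open CategoryTheory

universe u₁ u₂ v₃ u₃ v₄ u₄ v₅ u₅ v₆ u₆

/-- The restriction of the category of `Φ`-algebras to the full subcategory given by `P`. -/
abbrev AlgSub {E : Type u₅} [Category.{v₅} E] (Φ : E ⥤ E) (P : E → Prop) :=
  ObjectProperty.FullSubcategory (fun A : Endofunctor.Algebra Φ => P A.a)

/-!
For `X` with `η_X` invertible, `L` is bijective on morphisms into `X`; together with `H` being fully
faithful, this makes the comma categories over `(H j, X)` and over `(j, L X)` that compute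
`Φ_{K₁,T₁}(H j, X)` and `Φ_{K₂,T₂}(j, L X)` both equivalent to the comma category of `K₂ × T₁`
over `(j, X)`. Since `L` preserves colimits, `X ↦ L Φ_{K₁,T₁}(H j, X)` is a pointwise Kan extension
along `K₂ × T₁`, and the comparison morphism it induces to `X ↦ Φ_{K₂,T₂}(j, L X)` is invertible
on `Fix_η(B₁)`. Such an isomorphism `L Ψ₁ ≅ Ψ₂ L` on `Fix_η(B₁)` transports algebra structures
along `L`, and back along `R` by transposition; `η` and `ε` are then algebra isomorphisms.
-/

namespace CategoryTheory

lemma CostructuredArrow.isEquivalence_post_of_bijective {B C D : Type*} [Category B] [Category C]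
    [Category D] (F : B ⥤ C) (G : C ⥤ D) (S : C)
    (hG : ∀ W : C, Function.Bijective (G.map : (W ⟶ S) → (G.obj W ⟶ G.obj S))) :
    (post F G S).IsEquivalence where
  full := ⟨fun {X Y} f => ⟨homMk f.left ((hG _).1 (by
    have := CostructuredArrow.w f
    dsimp [post] at this
    exact (G.map_comp _ _).trans this)), rfl⟩⟩
  essSurj := ⟨fun Y => by
    obtain ⟨g, hg⟩ := (hG _).2 Y.hom
    exact ⟨mk g, ⟨isoMk (Iso.refl _) (by dsimp [post]; simp [hg])⟩⟩⟩

namespace Functor.LeftExtension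

variable {C D D' Z : Type*} [Category C] [Category D] [Category D'] [Category Z]
  {K : C ⥤ D} {F : C ⥤ Z}

abbrev restrictAlong (G : D ⥤ D') (E : LeftExtension (K ⋙ G) F) : LeftExtension K F :=
  LeftExtension.mk (G ⋙ E.right) E.hom

noncomputable def IsPointwiseLeftKanExtensionAt.restrictAlong {G : D ⥤ D'}
    {E : LeftExtension (K ⋙ G) F} {S : D} (h : E.IsPointwiseLeftKanExtensionAt (G.obj S))
    [(CostructuredArrow.post K G S).IsEquivalence] :
    (E.restrictAlong G).IsPointwiseLeftKanExtensionAt S :=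
  h.whiskerEquivalence (CostructuredArrow.post K G S).asEquivalence

lemma isIso_right_app_of_isPointwiseLeftKanExtensionAt {E E' : LeftExtension K F} (f : E ⟶ E')
    {Y : D} (h : E.IsPointwiseLeftKanExtensionAt Y) (h' : E'.IsPointwiseLeftKanExtensionAt Y) :
    IsIso (f.right.app Y) := by
  have : IsIso ((coconeAtFunctor K F Y).map f) := Limits.IsColimit.hom_isIso h h' _
  exact inferInstanceAs (IsIso ((Limits.Cocone.forget _).map ((coconeAtFunctor K F Y).map f)))

end Functor.LeftExtension

namespace Adjunction

variable {C D : Type*} [Category C] [Category D] {L : C ⥤ D} {R : D ⥤ C} (adj : L ⊣ R)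

abbrev fixUnit : ObjectProperty C := fun X => IsIso (adj.unit.app X)

abbrev fixCounit : ObjectProperty D := fun Y => IsIso (adj.counit.app Y)

lemma isIso_counit_app_obj {X : C} (hX : adj.fixUnit X) : IsIso (adj.counit.app (L.obj X)) := by
  rw [← adj.inv_map_unit]
  infer_instance

lemma isIso_unit_app_obj {Y : D} (hY : adj.fixCounit Y) : IsIso (adj.unit.app (R.obj Y)) := by
  rw [← adj.inv_counit_map]
  infer_instance

lemma map_bijective_of_isIso_unit_app {X : C} [IsIso (adj.unit.app X)] (W : C) :
    Function.Bijective (L.map : (W ⟶ X) → (L.obj W ⟶ L.obj X)) := by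
  have : L.map = (adj.homEquiv W (L.obj X)).symm ∘
      (Iso.refl W).homCongr (asIso (adj.unit.app X)) := by
    funext g
    simp [homEquiv_counit]
  rw [this]
  exact (Equiv.bijective _).comp (Equiv.bijective _)

variable {adj} {Ψ₁ : C ⥤ C} {Ψ₂ : D ⥤ D} (θ : adj.fixUnit.ι ⋙ Ψ₁ ⋙ L ≅ adj.fixUnit.ι ⋙ L ⋙ Ψ₂)

def algSubFunctor : AlgSub Ψ₁ adj.fixUnit ⥤ AlgSub Ψ₂ adj.fixCounit where
  obj A := ⟨⟨L.obj A.obj.a, θ.inv.app ⟨A.obj.a, A.property⟩ ≫ L.map A.obj.str⟩,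
    adj.isIso_counit_app_obj A.property⟩
  map {A B} f := ObjectProperty.homMk
    { f := L.map f.hom.f
      h := by
        have := θ.inv.naturality (X := ⟨A.obj.a, A.property⟩) (Y := ⟨B.obj.a, B.property⟩)
          (ObjectProperty.homMk f.hom.f)
        dsimp at this
        dsimp only
        rw [reassoc_of% this, Category.assoc, ← L.map_comp, ← L.map_comp, f.hom.h] }

def algSubInverse : AlgSub Ψ₂ adj.fixCounit ⥤ AlgSub Ψ₁ adj.fixUnit where
  obj B := ⟨⟨R.obj B.obj.a, adj.homEquiv _ _
      (θ.hom.app ⟨R.obj B.obj.a, adj.isIso_unit_app_obj B.property⟩ ≫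
        Ψ₂.map (adj.counit.app B.obj.a) ≫ B.obj.str)⟩,
    adj.isIso_unit_app_obj B.property⟩
  map {A B} g := ObjectProperty.homMk
    { f := R.map g.hom.f
      h := by
        have := θ.hom.naturality
          (X := ⟨R.obj A.obj.a, adj.isIso_unit_app_obj A.property⟩)
          (Y := ⟨R.obj B.obj.a, adj.isIso_unit_app_obj B.property⟩)
          (ObjectProperty.homMk (R.map g.hom.f))
        dsimp at this
        rw [← adj.homEquiv_naturality_left, ← adj.homEquiv_naturality_right]
        congr 1
        simp [reassoc_of% this, ← Ψ₂.map_comp_assoc] }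

lemma unit_app_algSub_w (A : AlgSub Ψ₁ adj.fixUnit) :
    Ψ₁.map (adj.unit.app A.obj.a) ≫ adj.homEquiv _ _
        (θ.hom.app ⟨R.obj (L.obj A.obj.a),
            adj.isIso_unit_app_obj (adj.isIso_counit_app_obj A.property)⟩ ≫
          Ψ₂.map (adj.counit.app (L.obj A.obj.a)) ≫ θ.inv.app ⟨A.obj.a, A.property⟩ ≫
          L.map A.obj.str) =
      A.obj.str ≫ adj.unit.app A.obj.a := by
  have := θ.hom.naturality (X := ⟨A.obj.a, A.property⟩)
    (Y := ⟨R.obj (L.obj A.obj.a), adj.isIso_unit_app_obj (adj.isIso_counit_app_obj A.property)⟩)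
    (ObjectProperty.homMk (adj.unit.app A.obj.a))
  dsimp at this
  rw [← adj.homEquiv_naturality_left, reassoc_of% this, ← Ψ₂.map_comp_assoc,
    adj.left_triangle_components, Ψ₂.map_id, Category.id_comp, Iso.hom_inv_id_app_assoc,
    adj.homEquiv_unit, ← adj.unit_naturality]
  rfl

lemma counit_app_algSub_w (B : AlgSub Ψ₂ adj.fixCounit) :
    Ψ₂.map (adj.counit.app B.obj.a) ≫ B.obj.str =
      (θ.inv.app ⟨R.obj B.obj.a, adj.isIso_unit_app_obj B.property⟩ ≫ L.map (adj.homEquiv _ _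
        (θ.hom.app ⟨R.obj B.obj.a, adj.isIso_unit_app_obj B.property⟩ ≫
          Ψ₂.map (adj.counit.app B.obj.a) ≫ B.obj.str))) ≫ adj.counit.app B.obj.a := by
  simp [homEquiv_unit]

noncomputable def algSubEquivalence : AlgSub Ψ₁ adj.fixUnit ≌ AlgSub Ψ₂ adj.fixCounit :=
  Equivalence.mk (algSubFunctor θ) (algSubInverse θ)
    (NatIso.ofComponents (fun A =>
      haveI : IsIso (adj.unit.app A.obj.a) := A.property
      ObjectProperty.isoMk _ <| Endofunctor.Algebra.isoMk
        (asIso (adj.unit.app A.obj.a) : A.obj.a ≅ R.obj (L.obj A.obj.a))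
        (unit_app_algSub_w θ A))
      (fun f => by ext; exact adj.unit.naturality f.hom.f))
    (NatIso.ofComponents (fun B =>
      haveI : IsIso (adj.counit.app B.obj.a) := B.property
      ObjectProperty.isoMk _ <| Endofunctor.Algebra.isoMk
        (asIso (adj.counit.app B.obj.a) : L.obj (R.obj B.obj.a) ≅ B.obj.a)
        (counit_app_algSub_w θ B))
      (fun f => by ext; exact adj.counit.naturality f.hom.f))

end Adjunction

section KanComparison

variable {I A J₁ J₂ B₁ B₂ : Type*} [Category I] [Category A] [Category J₁] [Category J₂]
  [Category B₁] [Category B₂] {K : I ⥤ J₂} {T : A ⥤ B₁} {F : I × A ⥤ B₁}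
  {H : J₂ ⥤ J₁} [H.Full] [H.Faithful] {L : B₁ ⥤ B₂} {R : B₂ ⥤ B₁}
  {E₁ : J₁ × B₁ ⥤ B₁} {u₁ : F ⟶ ((K ⋙ H).prod T) ⋙ E₁}
  {E₂ : J₂ × B₂ ⥤ B₂} {u₂ : F ⋙ L ⟶ (K.prod (T ⋙ L)) ⋙ E₂}

noncomputable def isPointwiseLeftKanExtensionRestrictAlongComp (adj : L ⊣ R)
    (hE₁ : (Functor.LeftExtension.mk E₁ u₁).IsPointwiseLeftKanExtension) :
    (((Functor.LeftExtension.postcompose₂ _ _ L).obj (Functor.LeftExtension.mk E₁ u₁)).restrictAlong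
      (K := K.prod T) (H.prod (𝟭 B₁))).IsPointwiseLeftKanExtension := fun S =>
  have := CostructuredArrow.isEquivalence_post_of_bijective (K.prod T) (H.prod (𝟭 B₁)) S
    (fun _ => Function.Bijective.prodMap ⟨H.map_injective, H.map_surjective⟩ Function.bijective_id)
  have := adj.leftAdjoint_preservesColimits
  ((hE₁ _).postcompose L).restrictAlong

noncomputable def kanComparison (adj : L ⊣ R)
    (hE₁ : (Functor.LeftExtension.mk E₁ u₁).IsPointwiseLeftKanExtension) :
    H.prod (𝟭 B₁) ⋙ E₁ ⋙ L ⟶ (𝟭 J₂).prod L ⋙ E₂ :=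
  ((isPointwiseLeftKanExtensionRestrictAlongComp adj hE₁).homFrom
    ((Functor.LeftExtension.mk E₂ u₂).restrictAlong (K := K.prod T) ((𝟭 J₂).prod L))).right

lemma isIso_kanComparison_app (adj : L ⊣ R)
    (hE₁ : (Functor.LeftExtension.mk E₁ u₁).IsPointwiseLeftKanExtension)
    (hE₂ : (Functor.LeftExtension.mk E₂ u₂).IsPointwiseLeftKanExtension)
    (S : J₂ × B₁) [IsIso (adj.unit.app S.2)] :
    IsIso ((kanComparison adj hE₁ (u₂ := u₂)).app S) := by
  have := CostructuredArrow.isEquivalence_post_of_bijective (K.prod T) ((𝟭 J₂).prod L) S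
    (fun _ => Function.bijective_id.prodMap (adj.map_bijective_of_isIso_unit_app _))
  exact Functor.LeftExtension.isIso_right_app_of_isPointwiseLeftKanExtensionAt _
    (isPointwiseLeftKanExtensionRestrictAlongComp adj hE₁ S) (hE₂ (_, L.obj S.2)).restrictAlong

noncomputable def kanComparisonIso (adj : L ⊣ R)
    (hE₁ : (Functor.LeftExtension.mk E₁ u₁).IsPointwiseLeftKanExtension)
    (hE₂ : (Functor.LeftExtension.mk E₂ u₂).IsPointwiseLeftKanExtension) (j : J₂) :
    adj.fixUnit.ι ⋙ (Functor.curry.obj E₁).obj (H.obj j) ⋙ L ≅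
      adj.fixUnit.ι ⋙ L ⋙ (Functor.curry.obj E₂).obj j :=
  NatIso.ofComponents
    (fun X =>
      have := X.property
      have := isIso_kanComparison_app adj hE₁ hE₂ (j, X.obj)
      asIso ((kanComparison adj hE₁ (u₂ := u₂)).app (j, X.obj)))
    (fun {X Y} f => by
      simpa using (kanComparison adj hE₁ (u₂ := u₂)).naturality
        ((𝟙 j, f.hom) : (j, X.obj) ⟶ (j, Y.obj)))

end KanComparison

end CategoryTheory

theorem stmt14_general
    {I : Type u₁} [SmallCategory I] {A : Type u₂} [SmallCategory A]
    {J₁ : Type u₃} [Category.{v₃} J₁] {J₂ : Type u₄} [Category.{v₄} J₂]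
    {B₁ : Type u₅} [Category.{v₅} B₁]
    {B₂ : Type u₆} [Category.{v₆} B₂]
    (Φ : I × A ⥤ A)
    (K₁ : I ⥤ J₁) (K₂ : I ⥤ J₂) (T₁ : A ⥤ B₁) (T₂ : A ⥤ B₂)
    (E₁ : J₁ × B₁ ⥤ B₁) (u₁ : Φ ⋙ T₁ ⟶ (K₁.prod T₁) ⋙ E₁)
    (hE₁ : (Functor.LeftExtension.mk E₁ u₁).IsPointwiseLeftKanExtension)
    (E₂ : J₂ × B₂ ⥤ B₂) (u₂ : Φ ⋙ T₂ ⟶ (K₂.prod T₂) ⋙ E₂)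
    (hE₂ : (Functor.LeftExtension.mk E₂ u₂).IsPointwiseLeftKanExtension)
    (H : J₂ ⥤ J₁) [H.Full] [H.Faithful]
    (L : B₁ ⥤ B₂) (R : B₂ ⥤ B₁) (adj : L ⊣ R)
    (hT : T₁ ⋙ L = T₂) (hK : K₂ ⋙ H = K₁) :
    ∀ j : J₂,
      ∃ e : Equivalence
          (AlgSub ((Functor.curry.obj E₁).obj (H.obj j)) (fun X : B₁ => IsIso (adj.unit.app X)))
          (AlgSub ((Functor.curry.obj E₂).obj j) (fun Y : B₂ => IsIso (adj.counit.app Y))),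
        (∀ A', (e.functor.obj A').obj.a = L.obj A'.obj.a) ∧
        (∀ B', (e.inverse.obj B').obj.a = R.obj B'.obj.a) := by
  subst hT hK
  intro j
  exact ⟨Adjunction.algSubEquivalence (kanComparisonIso adj hE₁ hE₂ j), fun _ => rfl, fun _ => rfl⟩

theorem stmt14
    {I : Type u₁} [SmallCategory I] {A : Type u₂} [SmallCategory A]
    {J₁ : Type u₃} [Category.{v₃} J₁] {J₂ : Type u₄} [Category.{v₄} J₂]
    {B₁ : Type u₅} [Category.{v₅} B₁] [Limits.HasColimits B₁]
    {B₂ : Type u₆} [Category.{v₆} B₂] [Limits.HasColimits B₂]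
    (Φ : I × A ⥤ A)
    (K₁ : I ⥤ J₁) (K₂ : I ⥤ J₂) (T₁ : A ⥤ B₁) (T₂ : A ⥤ B₂)
    (E₁ : J₁ × B₁ ⥤ B₁) (u₁ : Φ ⋙ T₁ ⟶ (K₁.prod T₁) ⋙ E₁)
    (hE₁ : (Functor.LeftExtension.mk E₁ u₁).IsPointwiseLeftKanExtension)
    (E₂ : J₂ × B₂ ⥤ B₂) (u₂ : Φ ⋙ T₂ ⟶ (K₂.prod T₂) ⋙ E₂)
    (hE₂ : (Functor.LeftExtension.mk E₂ u₂).IsPointwiseLeftKanExtension)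
    (H : J₂ ⥤ J₁) [H.Full] [H.Faithful]
    (L : B₁ ⥤ B₂) (R : B₂ ⥤ B₁) (adj : L ⊣ R)
    (hT : T₁ ⋙ L = T₂) (hK : K₂ ⋙ H = K₁) :
    ∀ j : J₂,
      ∃ e : Equivalence
          (AlgSub ((Functor.curry.obj E₁).obj (H.obj j)) (fun X : B₁ => IsIso (adj.unit.app X)))
          (AlgSub ((Functor.curry.obj E₂).obj j) (fun Y : B₂ => IsIso (adj.counit.app Y))),
        (∀ A', (e.functor.obj A').obj.a = L.obj A'.obj.a) ∧
        (∀ B', (e.inverse.obj B').obj.a = R.obj B'.obj.a) :=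
  stmt14_general Φ K₁ K₂ T₁ T₂ E₁ u₁ hE₁ E₂ u₂ hE₂ H L R adj hT hK
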